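/- Let L ⊆ Σ* be an unbounded regular language such that there exists ε > 0 with |w|_a / |w| > ε for every letter a ∈ Σ and all but finitely many words w ∈ L. Then for every word w ∈ Σ*, the set L ∖ w↑ = {u ∈ L : w ⋢ u} is finite. -/

import Mathlib

/-- `wpow w n` is the word `w` concatenated `n` times (the `n`-th power of `w`). -/
def wpow {α : Type*} (w : List α) (n : ℕ) : List α :=
  (List.replicate n w).flatten

/-- A language is bounded if it is contained in some `w₁* w₂* ⋯ w_n*`. -/
def BoundedLang {A : Type*} (L : Language A) : Prop :=
  ∃ (n : ℕ) (w : Fin n → List A),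
    ∀ x ∈ L, ∃ m : Fin n → ℕ, x = (List.ofFn fun i => wpow (w i) (m i)).flatten

set_option linter.unusedSectionVars false
set_option linter.unusedVariables false

section Aux

variable {A : Type} [DecidableEq A]

/-- One step of the greedy subword-matching automaton: `r` is the part of the
target word still to be matched. -/
def sstep (r : List A) (a : A) : List A :=
  match r with
  | [] => []
  | b :: t => if a = b then t else b :: t

def srun (r : List A) (u : List A) : List A := u.foldl sstep r

@[simp] lemma srun_nil (u : List A) : srun ([] : List A) u = [] := by
  induction u with
  | nil => rfl
  | cons a u ih => simpa [srun, sstep] using ih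

lemma srun_eq_nil_iff (u : List A) : ∀ r : List A, srun r u = [] ↔ r.Sublist u := by
  induction u with
  | nil =>
    intro r
    simp [srun, List.sublist_nil]
  | cons a u ih =>
    intro r
    cases r with
    | nil => simp
    | cons b t =>
      by_cases hab : a = b
      · subst hab
        have : srun (a :: t) (a :: u) = srun t u := by simp [srun, sstep]
        rw [this, ih t, List.cons_sublist_cons]
      · have : srun (b :: t) (a :: u) = srun (b :: t) u := by
          simp [srun, sstep, if_neg hab]
        rw [this, ih (b :: t)]
        constructor
        · intro h; exact h.cons a
        · intro h
          cases h with
          | cons _ h => exact h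
          | cons_cons => exact absurd rfl hab

lemma sstep_suffix {w : List A} (r : List A) (hr : r <:+ w) (a : A) : sstep r a <:+ w := by
  cases r with
  | nil => exact hr
  | cons b t =>
    by_cases hab : a = b
    · simp only [sstep, if_pos hab]
      exact (List.suffix_cons b t).trans hr
    · simpa [sstep, if_neg hab] using hr

noncomputable instance sufFintype [Fintype A] (w : List A) :
    Fintype {r : List A // r <:+ w} := by
  have hfin : {r : List A | r <:+ w}.Finite :=
    (List.finite_length_le A w.length).subset fun r hr => hr.length_le
  exact @Fintype.ofFinite _ hfin.to_subtype

def prodDFA [Fintype A] {σ : Type} (M1 : DFA A σ) (w : List A) :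
    DFA A (σ × {r : List A // r <:+ w}) where
  step := fun p a => (M1.step p.1 a, ⟨sstep p.2.1 a, sstep_suffix _ p.2.2 a⟩)
  start := (M1.start, ⟨w, List.suffix_refl w⟩)
  accept := {p | p.1 ∈ M1.accept ∧ p.2.1 ≠ []}

lemma prodDFA_evalFrom [Fintype A] {σ : Type} (M1 : DFA A σ) (w : List A) (u : List A) :
    ∀ (s : σ) (r : {r : List A // r <:+ w}),
      ((prodDFA M1 w).evalFrom (s, r) u).1 = M1.evalFrom s u ∧
      ((prodDFA M1 w).evalFrom (s, r) u).2.1 = srun r.1 u := by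
  induction u with
  | nil => intro s r; exact ⟨rfl, rfl⟩
  | cons a u ih =>
    intro s r
    have h1 : (prodDFA M1 w).evalFrom (s, r) (a :: u) =
        (prodDFA M1 w).evalFrom ((prodDFA M1 w).step (s, r) a) u := rfl
    have h2 : M1.evalFrom s (a :: u) = M1.evalFrom (M1.step s a) u := rfl
    have h3 : srun r.1 (a :: u) = srun (sstep r.1 a) u := rfl
    rw [h1, h2, h3]
    exact ih (M1.step s a) ⟨sstep r.1 a, sstep_suffix _ r.2 a⟩

lemma prodDFA_accepts [Fintype A] {σ : Type} (M1 : DFA A σ) (w : List A) (u : List A) :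
    u ∈ (prodDFA M1 w).accepts ↔ u ∈ M1.accepts ∧ ¬ w.Sublist u := by
  obtain ⟨h1, h2⟩ := prodDFA_evalFrom M1 w u M1.start ⟨w, List.suffix_refl w⟩
  have e1 : (prodDFA M1 w).eval u =
      (prodDFA M1 w).evalFrom (M1.start, ⟨w, List.suffix_refl w⟩) u := rfl
  have e2 : M1.eval u = M1.evalFrom M1.start u := rfl
  rw [DFA.mem_accepts, DFA.mem_accepts, e1, e2]
  have e3 : ((prodDFA M1 w).evalFrom (M1.start, ⟨w, List.suffix_refl w⟩) u ∈ (prodDFA M1 w).accept) ↔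
      (M1.evalFrom M1.start u ∈ M1.accept ∧ srun w u ≠ []) := by
    rw [show ((prodDFA M1 w).accept = {p | p.1 ∈ M1.accept ∧ p.2.1 ≠ []}) from rfl]
    simp only [Set.mem_setOf_eq, h1, h2]
  rw [e3, Ne, srun_eq_nil_iff]

lemma wpow_succ {α : Type*} (y : List α) (n : ℕ) : wpow y (n + 1) = y ++ wpow y n := by
  simp [wpow, List.replicate_succ]

lemma count_wpow (y : List A) (n : ℕ) (a : A) : (wpow y n).count a = n * y.count a := by
  induction n with
  | zero => simp [wpow]
  | succ n ih => rw [wpow_succ, List.count_append, ih]; ring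

lemma length_wpow {α : Type*} (y : List α) (n : ℕ) : (wpow y n).length = n * y.length := by
  induction n with
  | zero => simp [wpow]
  | succ n ih => rw [wpow_succ, List.length_append, ih]; ring

lemma sublist_wpow_of_mem (y : List A) :
    ∀ w : List A, (∀ b ∈ w, b ∈ y) → w.Sublist (wpow y w.length) := by
  intro w
  induction w with
  | nil => intro _; simp
  | cons b t ih =>
    intro h
    have hb : b ∈ y := h b List.mem_cons_self
    obtain ⟨p, q, rfl⟩ := List.append_of_mem hb
    have ht : t.Sublist (wpow (p ++ b :: q) t.length) := ih fun c hc => h c (List.mem_cons_of_mem b hc)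
    rw [show (b :: t).length = t.length + 1 from rfl, wpow_succ]
    have h1 : (b :: t).Sublist (b :: (q ++ wpow (p ++ b :: q) t.length)) := by
      apply List.Sublist.cons₂
      exact ht.trans (List.sublist_append_right q _)
    have h2 : (b :: (q ++ wpow (p ++ b :: q) t.length)).Sublist
        ((p ++ b :: q) ++ wpow (p ++ b :: q) t.length) := by
      rw [List.append_assoc, List.cons_append]
      exact List.sublist_append_right p _
    exact h1.trans h2

end Aux

/-- If `L` is unbounded regular and almost all words of `L` have a non-negligible number
of occurrences of every letter, then `L ∖ w↑` is finite for every word `w`. -/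
theorem cofinitely_above_w {A : Type} [Fintype A] [DecidableEq A] (L : Language A)
    (hreg : L.IsRegular) (hub : ¬ BoundedLang L)
    (hfreq : ∃ ε : ℝ, 0 < ε ∧ ∀ a : A,
      {w : List A | w ∈ L ∧ ¬ (ε < (w.count a : ℝ) / (w.length : ℝ))}.Finite) :
    ∀ w : List A, {u : List A | u ∈ L ∧ ¬ w.Sublist u}.Finite := by
  obtain ⟨ε, hε, hfin⟩ := hfreq
  obtain ⟨σ, hσ, M1, hM1⟩ := hreg
  intro w
  by_contra hinf
  have hinf' : {u : List A | u ∈ L ∧ ¬ w.Sublist u}.Infinite := hinf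
  set P := prodDFA M1 w with hP
  set κ := Fintype.card (σ × {r : List A // r <:+ w}) with hκ
  obtain ⟨u, hu⟩ := (hinf'.diff (List.finite_length_lt (α := A) κ)).nonempty
  have hulen : κ ≤ u.length := not_lt.mp hu.2
  have huL : u ∈ L := hu.1.1
  have huw : ¬ w.Sublist u := hu.1.2
  have huacc : u ∈ P.accepts := (prodDFA_accepts M1 w u).mpr ⟨by rw [hM1]; exact huL, huw⟩
  obtain ⟨x, y, z, hsplit, hxylen, hy, hpump⟩ := P.pumping_lemma huacc hulen
  have hylen : 0 < y.length := List.length_pos_iff.mpr hy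
  -- all pumped words are in L and avoid w
  have hmem : ∀ n : ℕ, (x ++ wpow y n ++ z) ∈ L ∧ ¬ w.Sublist (x ++ wpow y n ++ z) := by
    intro n
    have hk : wpow y n ∈ KStar.kstar ({y} : Language A) :=
      Language.join_mem_kstar fun v hv => (List.eq_of_mem_replicate hv : v = y)
    have h1 : (x ++ wpow y n ++ z) ∈ {x} * KStar.kstar ({y} : Language A) * {z} :=
      Language.append_mem_mul (Language.append_mem_mul rfl hk) rfl
    have h2 := (prodDFA_accepts M1 w _).mp (hpump h1)
    exact ⟨by rw [← hM1]; exact h2.1, h2.2⟩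
  -- lengths
  have hlen : ∀ n : ℕ, (x ++ wpow y n ++ z).length = x.length + z.length + n * y.length := by
    intro n
    simp [List.length_append, length_wpow]
    ring
  -- every letter occurs in y
  have hyc : ∀ a : A, 0 < y.count a := by
    intro a
    by_contra h0
    have hc0 : y.count a = 0 := Nat.eq_zero_of_not_pos h0
    have hcnt : ∀ n : ℕ, (x ++ wpow y n ++ z).count a = x.count a + z.count a := by
      intro n
      simp [List.count_append, count_wpow, hc0]
    -- the map n ↦ pumped word is injective
    have hinj : Function.Injective (fun n : ℕ => x ++ wpow y n ++ z) := by
      intro m n hmn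
      have := congrArg List.length hmn
      rw [hlen m, hlen n] at this
      have : m * y.length = n * y.length := by omega
      exact Nat.eq_of_mul_eq_mul_right hylen this
    have hpre : {n : ℕ | (x ++ wpow y n ++ z) ∈
        {v : List A | v ∈ L ∧ ¬ (ε < (v.count a : ℝ) / (v.length : ℝ))}}.Finite :=
      (hfin a).preimage (hinj.injOn)
    obtain ⟨N, hN⟩ := hpre.bddAbove
    set C : ℝ := ((x.count a + z.count a : ℕ) : ℝ) with hC
    obtain ⟨n₀, hn₀⟩ := exists_nat_gt (C / ε)
    set n := max (N + 1) n₀ with hn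
    have hnot : (x ++ wpow y n ++ z) ∉
        {v : List A | v ∈ L ∧ ¬ (ε < (v.count a : ℝ) / (v.length : ℝ))} := by
      intro hmm
      have : n ≤ N := hN hmm
      omega
    have hgt : ε < ((x ++ wpow y n ++ z).count a : ℝ) / ((x ++ wpow y n ++ z).length : ℝ) := by
      by_contra hcon
      exact hnot ⟨(hmem n).1, hcon⟩
    rw [hcnt n, hlen n] at hgt
    have hlpos : (0 : ℝ) < ((x.length + z.length + n * y.length : ℕ) : ℝ) := by
      have : 0 < x.length + z.length + n * y.length := by
        have : 1 ≤ n * y.length := Nat.one_le_iff_ne_zero.mpr (by positivity)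
        omega
      exact_mod_cast this
    rw [lt_div_iff₀ hlpos] at hgt
    -- hgt : ε * len < C; but len ≥ n > C/ε
    have hnlen : (n : ℝ) ≤ ((x.length + z.length + n * y.length : ℕ) : ℝ) := by
      have : n ≤ x.length + z.length + n * y.length := by
        have := Nat.le_mul_of_pos_right n hylen
        omega
      exact_mod_cast this
    have h1 : C < ε * n := by
      have h2 : C / ε < (n : ℝ) := lt_of_lt_of_le (by exact_mod_cast hn₀ : C / ε < (n₀ : ℝ))
        (by exact_mod_cast le_max_right (N + 1) n₀)
      calc C = ε * (C / ε) := by field_simp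
        _ < ε * n := by exact mul_lt_mul_of_pos_left h2 hε
    have h3 : ε * (n : ℝ) ≤ ε * ((x.length + z.length + n * y.length : ℕ) : ℝ) :=
      mul_le_mul_of_nonneg_left hnlen hε.le
    linarith
  -- conclude: w is a sublist of the pumped word with n = w.length
  have hws : w.Sublist (x ++ wpow y w.length ++ z) := by
    have h1 : w.Sublist (wpow y w.length) :=
      sublist_wpow_of_mem y w fun b _ => List.count_pos_iff.mp (hyc b)
    have h2 : (wpow y w.length).Sublist (x ++ wpow y w.length ++ z) := by
      rw [List.append_assoc]
      exact ((List.sublist_append_left _ z).trans (List.sublist_append_right x _))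
    exact h1.trans h2
  exact (hmem w.length).2 hws
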